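/- Let K ≥ 1 and N_t ≥ 1 be integers, ρ > 0 a real number, H̃ a real (2K) × (2N_t) matrix, and ‖H̃‖ its ℓ²→ℓ² operator norm. Then for every vector x ∈ ℝ^{2N_t} with ‖x‖² = N_t, one has ∏_{ℓ=1}^{2K} Φ(√(2ρ/N_t)·(H̃x)_ℓ) ≤ Φ(√(ρ/K)·‖H̃‖)^{2K}. -/

import Mathlib

open scoped BigOperators

/-- The standard normal cumulative distribution function
`Φ(t) = ∫_{−∞}^{t} (1/√(2π)) e^{−τ²/2} dτ`. -/
noncomputable def stdNormalCDF (t : ℝ) : ℝ :=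
  ∫ τ in Set.Iic t, (Real.sqrt (2 * Real.pi))⁻¹ * Real.exp (-τ ^ 2 / 2)

/-- The `ℓ²→ℓ²` operator norm of a real matrix. -/
noncomputable def l2OpNorm {m n : ℕ} (A : Matrix (Fin m) (Fin n) ℝ) : ℝ :=
  ‖LinearMap.toContinuousLinearMap (Matrix.toEuclideanLin A)‖

/-!
`Φ` is log-concave: `(log Φ)'' = -φ (t Φ + φ) / Φ²`, and `t Φ(t) + φ(t) ≥ 0` is Mills' inequality.
Jensen's inequality for `log Φ` therefore bounds the product of the `2K` values `Φ(a_ℓ)` by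
`Φ(ā)^{2K}`, where `ā` is their mean argument. By Cauchy–Schwarz against the all-ones vector,
`∑ (H̃x)_ℓ ≤ √(2K) ‖H̃x‖ ≤ √(2K) ‖H̃‖ √N_t`, so `ā ≤ √(ρ/K) ‖H̃‖`, and `Φ` is monotone.
-/

open MeasureTheory Real Set Filter Topology

noncomputable def stdNormalPDF (τ : ℝ) : ℝ := (√(2 * π))⁻¹ * exp (-τ ^ 2 / 2)

lemma stdNormalPDF_pos (t : ℝ) : 0 < stdNormalPDF t := by
  unfold stdNormalPDF; positivity

lemma continuous_stdNormalPDF : Continuous stdNormalPDF := by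
  unfold stdNormalPDF; fun_prop

lemma integrable_stdNormalPDF : Integrable stdNormalPDF :=
  ((integrable_exp_neg_mul_sq (by norm_num : (0 : ℝ) < 1 / 2)).const_mul (√(2 * π))⁻¹).congr
    (.of_forall fun τ ↦ by simp only [stdNormalPDF]; ring_nf)

lemma integrable_mul_stdNormalPDF : Integrable fun τ ↦ τ * stdNormalPDF τ :=
  ((integrable_mul_exp_neg_mul_sq (by norm_num : (0 : ℝ) < 1 / 2)).const_mul (√(2 * π))⁻¹).congr
    (.of_forall fun τ ↦ by simp only [stdNormalPDF]; ring_nf)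

lemma hasDerivAt_stdNormalPDF (t : ℝ) : HasDerivAt stdNormalPDF (-t * stdNormalPDF t) t := by
  have h : HasDerivAt (fun τ : ℝ ↦ -τ ^ 2 / 2) (-t) t := by
    simpa [neg_div] using (hasDerivAt_pow 2 t).neg.div_const 2
  exact (h.exp.const_mul (√(2 * π))⁻¹).congr_deriv (by simp only [stdNormalPDF]; ring)

lemma tendsto_stdNormalPDF_atBot : Tendsto stdNormalPDF atBot (𝓝 0) := by
  have h : Tendsto (fun τ : ℝ ↦ τ ^ 2 / 2) atBot atTop := by
    simpa only [sq, id] using (tendsto_id.atBot_mul_atBot₀ tendsto_id).atTop_div_const two_pos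
  have := (tendsto_exp_atBot.comp (tendsto_neg_atTop_atBot.comp h)).const_mul (√(2 * π))⁻¹
  rw [mul_zero] at this
  exact this.congr fun τ ↦ by simp [stdNormalPDF, neg_div]

lemma stdNormalCDF_eq_setIntegral (t : ℝ) : stdNormalCDF t = ∫ τ in Iic t, stdNormalPDF τ := rfl

lemma stdNormalCDF_pos (t : ℝ) : 0 < stdNormalCDF t := by
  rw [stdNormalCDF_eq_setIntegral, setIntegral_pos_iff_support_of_nonneg_ae
    (.of_forall fun τ ↦ (stdNormalPDF_pos τ).le) integrable_stdNormalPDF.integrableOn]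
  simp [Function.support_eq_univ fun τ ↦ (stdNormalPDF_pos τ).ne']

lemma monotone_stdNormalCDF : Monotone stdNormalCDF := fun _ _ hst ↦
  setIntegral_mono_set integrable_stdNormalPDF.integrableOn
    (.of_forall fun τ ↦ (stdNormalPDF_pos τ).le) (Iic_subset_Iic.2 hst).eventuallyLE

lemma hasDerivAt_stdNormalCDF (t : ℝ) : HasDerivAt stdNormalCDF (stdNormalPDF t) t := by
  have h := (intervalIntegral.integral_hasDerivAt_right integrable_stdNormalPDF.intervalIntegrable
    (continuous_stdNormalPDF.stronglyMeasurableAtFilter _ _) continuous_stdNormalPDF.continuousAt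
    (a := 0) (b := t)).const_add (stdNormalCDF 0)
  refine h.congr_of_eventuallyEq (.of_forall fun s ↦ ?_)
  have := intervalIntegral.integral_Iic_sub_Iic integrable_stdNormalPDF.integrableOn
    integrable_stdNormalPDF.integrableOn (a := 0) (b := s)
  simp only [stdNormalCDF_eq_setIntegral] at this ⊢
  linarith

lemma setIntegral_Iic_mul_stdNormalPDF (t : ℝ) :
    ∫ τ in Iic t, τ * stdNormalPDF τ = -stdNormalPDF t := by
  have h := integral_Iic_of_hasDerivAt_of_tendsto' (f := fun τ ↦ -stdNormalPDF τ) (a := t)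
    (fun x _ ↦ (hasDerivAt_stdNormalPDF x).neg.congr_deriv (by ring))
    integrable_mul_stdNormalPDF.integrableOn (m := 0)
    (by simpa using tendsto_stdNormalPDF_atBot.neg)
  simpa using h

lemma mul_stdNormalCDF_add_stdNormalPDF_nonneg (t : ℝ) :
    0 ≤ t * stdNormalCDF t + stdNormalPDF t := by
  rcases le_or_gt 0 t with ht | ht
  · have := stdNormalCDF_pos t
    have := stdNormalPDF_pos t
    positivity
  have hle : stdNormalCDF t ≤ ∫ τ in Iic t, t⁻¹ * (τ * stdNormalPDF τ) := by
    rw [stdNormalCDF_eq_setIntegral]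
    refine setIntegral_mono_on integrable_stdNormalPDF.integrableOn
      (integrable_mul_stdNormalPDF.integrableOn.const_mul _) measurableSet_Iic fun τ hτ ↦ ?_
    have h1 : 1 ≤ t⁻¹ * τ := by
      rw [← div_eq_inv_mul, le_div_iff_of_neg ht]; simpa using hτ
    nlinarith [stdNormalPDF_pos τ]
  rw [integral_const_mul, setIntegral_Iic_mul_stdNormalPDF] at hle
  have := mul_le_mul_of_nonpos_left hle ht.le
  rw [← mul_assoc, mul_inv_cancel₀ ht.ne] at this
  linarith

lemma concaveOn_log_stdNormalCDF : ConcaveOn ℝ univ fun t ↦ log (stdNormalCDF t) := by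
  have hlog (t : ℝ) : HasDerivAt (fun s ↦ log (stdNormalCDF s))
      (stdNormalPDF t / stdNormalCDF t) t :=
    (hasDerivAt_stdNormalCDF t).log (stdNormalCDF_pos t).ne'
  have hratio (t : ℝ) : HasDerivAt (fun s ↦ stdNormalPDF s / stdNormalCDF s)
      (-(stdNormalPDF t * (t * stdNormalCDF t + stdNormalPDF t)) / stdNormalCDF t ^ 2) t :=
    ((hasDerivAt_stdNormalPDF t).div (hasDerivAt_stdNormalCDF t)
      (stdNormalCDF_pos t).ne').congr_deriv (by ring)
  have hderiv : deriv (fun s ↦ log (stdNormalCDF s)) = fun t ↦ stdNormalPDF t / stdNormalCDF t :=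
    funext fun t ↦ (hlog t).deriv
  refine concaveOn_univ_of_deriv2_nonpos (fun t ↦ (hlog t).differentiableAt)
    (hderiv ▸ fun t ↦ (hratio t).differentiableAt) fun t ↦ ?_
  rw [Function.iterate_succ_apply, Function.iterate_one, hderiv, (hratio t).deriv]
  exact div_nonpos_of_nonpos_of_nonneg (neg_nonpos.2 (mul_nonneg (stdNormalPDF_pos t).le
    (mul_stdNormalCDF_add_stdNormalPDF_nonneg t))) (sq_nonneg _)

lemma prod_le_pow_card_of_concaveOn_log {ι : Type*} [Fintype ι] [Nonempty ι] {f : ℝ → ℝ}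
    (hf : ∀ x, 0 < f x) (hconc : ConcaveOn ℝ univ fun x ↦ log (f x)) (a : ι → ℝ) :
    ∏ i, f (a i) ≤ f ((Fintype.card ι : ℝ)⁻¹ * ∑ i, a i) ^ Fintype.card ι := by
  have hn : (0 : ℝ) < Fintype.card ι := by exact_mod_cast Fintype.card_pos
  have hjensen := hconc.le_map_sum (t := Finset.univ) (w := fun _ ↦ (Fintype.card ι : ℝ)⁻¹)
    (p := a) (fun _ _ ↦ by positivity) (by simp [hn.ne']) (fun _ _ ↦ mem_univ _)
  simp only [smul_eq_mul, ← Finset.mul_sum] at hjensen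
  rw [← log_le_log_iff (Finset.prod_pos fun i _ ↦ hf _) (pow_pos (hf _) _), log_prod
    (fun i _ ↦ (hf _).ne'), log_pow]
  rwa [inv_mul_le_iff₀ hn] at hjensen

lemma sum_le_sqrt_card_mul_norm {ι : Type*} [Fintype ι] (y : EuclideanSpace ℝ ι) :
    ∑ i, y i ≤ √(Fintype.card ι) * ‖y‖ := by
  simpa [PiLp.inner_apply, EuclideanSpace.norm_eq] using
    real_inner_le_norm (WithLp.toLp 2 fun _ ↦ (1 : ℝ)) y

lemma norm_toEuclideanLin_le {m n : ℕ} (A : Matrix (Fin m) (Fin n) ℝ)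
    (x : EuclideanSpace ℝ (Fin n)) : ‖Matrix.toEuclideanLin A x‖ ≤ l2OpNorm A * ‖x‖ :=
  (LinearMap.toContinuousLinearMap (Matrix.toEuclideanLin A)).le_opNorm x

theorem likelihood_upper_bound_general (K Nt : ℕ) (hK : 1 ≤ K) (hNt : 1 ≤ Nt) (ρ : ℝ)
    (Htil : Matrix (Fin (2 * K)) (Fin (2 * Nt)) ℝ)
    (x : EuclideanSpace ℝ (Fin (2 * Nt))) (hx : ‖x‖ ^ 2 = (Nt : ℝ)) :
    ∏ ℓ, stdNormalCDF (Real.sqrt (2 * ρ / Nt) * Htil.mulVec x ℓ) ≤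
      (stdNormalCDF (Real.sqrt (ρ / K) * l2OpNorm Htil)) ^ (2 * K) := by
  have hnorm : ‖x‖ = √Nt := by rw [← hx, sqrt_sq (norm_nonneg x)]
  have hcoeff : ((2 * K : ℕ) : ℝ)⁻¹ * √(2 * ρ / Nt) * (√(2 * K : ℕ) * √Nt) = √(ρ / K) := by
    have : (K : ℝ) ≠ 0 := by positivity
    have : (Nt : ℝ) ≠ 0 := by positivity
    rw [← sqrt_mul (by positivity), mul_assoc, ← sqrt_mul' _ (by positivity),
      ← sqrt_sq (by positivity : (0 : ℝ) ≤ ((2 * K : ℕ) : ℝ)⁻¹), ← sqrt_mul (sq_nonneg _)]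
    congr 1
    push_cast
    field_simp
  have hmean : ((2 * K : ℕ) : ℝ)⁻¹ * ∑ ℓ, √(2 * ρ / Nt) * Htil.mulVec x ℓ ≤
      √(ρ / K) * l2OpNorm Htil := calc
    _ = ((2 * K : ℕ) : ℝ)⁻¹ * √(2 * ρ / Nt) * ∑ ℓ, Matrix.toEuclideanLin Htil x ℓ := by
      rw [← Finset.mul_sum, mul_assoc]; rfl
    _ ≤ ((2 * K : ℕ) : ℝ)⁻¹ * √(2 * ρ / Nt) * (√(2 * K : ℕ) * (l2OpNorm Htil * √Nt)) := by
      gcongr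
      simpa [hnorm] using (sum_le_sqrt_card_mul_norm _).trans
        (mul_le_mul_of_nonneg_left (norm_toEuclideanLin_le Htil x) (sqrt_nonneg _))
    _ = √(ρ / K) * l2OpNorm Htil := by rw [← hcoeff]; ring
  have : Nonempty (Fin (2 * K)) := ⟨⟨0, by omega⟩⟩
  calc ∏ ℓ, stdNormalCDF (√(2 * ρ / Nt) * Htil.mulVec x ℓ)
      ≤ stdNormalCDF (((2 * K : ℕ) : ℝ)⁻¹ * ∑ ℓ, √(2 * ρ / Nt) * Htil.mulVec x ℓ) ^ (2 * K) := by
        simpa using prod_le_pow_card_of_concaveOn_log stdNormalCDF_pos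
          concaveOn_log_stdNormalCDF fun ℓ ↦ √(2 * ρ / Nt) * Htil.mulVec x ℓ
    _ ≤ _ := pow_le_pow_left₀ (stdNormalCDF_pos _).le (monotone_stdNormalCDF hmean) _

/-- Lemma 1: for every `x ∈ ℝ^{2N_t}` with `‖x‖² = N_t`, the likelihood
`∏_{ℓ=1}^{2K} Φ(√(2ρ/N_t)·(H̃x)_ℓ)` is upper bounded by `Φ(√(ρ/K)·‖H̃‖)^{2K}`. -/
theorem likelihood_upper_bound (K Nt : ℕ) (hK : 1 ≤ K) (hNt : 1 ≤ Nt) (ρ : ℝ) (hρ : 0 < ρ)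
    (Htil : Matrix (Fin (2 * K)) (Fin (2 * Nt)) ℝ)
    (x : EuclideanSpace ℝ (Fin (2 * Nt))) (hx : ‖x‖ ^ 2 = (Nt : ℝ)) :
    ∏ ℓ, stdNormalCDF (Real.sqrt (2 * ρ / Nt) * Htil.mulVec x ℓ) ≤
      (stdNormalCDF (Real.sqrt (ρ / K) * l2OpNorm Htil)) ^ (2 * K) :=
  likelihood_upper_bound_general K Nt hK hNt ρ Htil x hx
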